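/- In a finite MDP, the map from reward functions r : S × A → ℝ to their optimal soft-Q functions — defined as the unique solution of the soft Bellman equation Q(s,a) = r(s,a) + γ·∑_{s'} T(s'|s,a)·α·log ∑_{a'} exp(Q(s',a')/α) — is a bijection; explicitly the soft Bellman operator has a unique fixed point for each r, and distinct rewards yield distinct fixed points, with inverse r(s,a) = Q(s,a) − γ·∑_{s'} T(s'|s,a)·V_Q(s') where V_Q(s') = α·log ∑_{a'} exp(Q(s',a')/α). -/

import Mathlib

/-!
The soft maximum `x ↦ α log ∑ exp (x i / α)` is monotone and commutes with adding constants,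
hence is `1`-Lipschitz for the sup norm. Averaging over a transition kernel does not increase
distances, so the soft Bellman operator is a `γ`-contraction on the complete space `S → A → ℝ`
and Banach's fixed point theorem gives a unique soft-Q function for every reward. The reward is
recovered from its fixed point by solving the Bellman equation for `r`.
-/

/-- `Q` is a fixed point of the soft Bellman operator for reward `r`. -/
def IsSoftBellmanFixedPoint {S A : Type*} [Fintype S] [Fintype A]
    (T : S → A → S → ℝ) (γ α : ℝ) (r : S → A → ℝ) (Q : S → A → ℝ) : Prop :=
  ∀ s a, Q s a = r s a +
    γ * ∑ s', T s a s' * (α * Real.log (∑ a', Real.exp (Q s' a' / α)))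

open Real Finset

noncomputable section

def softMax {ι : Type*} [Fintype ι] (α : ℝ) (x : ι → ℝ) : ℝ :=
  α * log (∑ i, exp (x i / α))

section SoftMax

variable {ι : Type*} [Fintype ι] [Nonempty ι] {α : ℝ}

lemma softMax_mono (hα : 0 < α) : Monotone (softMax (ι := ι) α) := by
  intro x y hxy
  unfold softMax
  gcongr with i
  exact hxy i

lemma softMax_add_const (hα : 0 < α) (x : ι → ℝ) (c : ℝ) :
    softMax α (fun i => x i + c) = softMax α x + c := by
  have hsum : ∑ i, exp ((x i + c) / α) = exp (c / α) * ∑ i, exp (x i / α) := by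
    simp only [add_div, exp_add, mul_sum, mul_comm]
  have hpos : 0 < ∑ i, exp (x i / α) := sum_pos (fun i _ => exp_pos _) univ_nonempty
  unfold softMax
  rw [hsum, log_mul (exp_pos _).ne' hpos.ne', log_exp]
  field_simp
  ring

lemma lipschitzWith_one_softMax (hα : 0 < α) : LipschitzWith 1 (softMax (ι := ι) α) := by
  have upper : ∀ x y : ι → ℝ, softMax α x ≤ softMax α y + dist x y := fun x y => by
    rw [← softMax_add_const hα]
    refine softMax_mono hα fun i => ?_
    have := dist_le_pi_dist x y i
    rw [Real.dist_eq] at this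
    linarith [le_abs_self (x i - y i)]
  refine LipschitzWith.of_dist_le_mul fun x y => ?_
  rw [NNReal.coe_one, one_mul, Real.dist_eq, abs_sub_le_iff]
  constructor
  · linarith [upper x y]
  · linarith [upper y x, dist_comm x y]

end SoftMax

lemma abs_sum_mul_le_of_sum_eq_one {ι : Type*} [Fintype ι] {w f : ι → ℝ} {c : ℝ}
    (hw : ∀ i, 0 ≤ w i) (hw_sum : ∑ i, w i = 1) (hf : ∀ i, |f i| ≤ c) :
    |∑ i, w i * f i| ≤ c :=
  calc |∑ i, w i * f i| ≤ ∑ i, w i * |f i| := by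
        refine (abs_sum_le_sum_abs _ _).trans_eq ?_
        simp only [abs_mul, abs_of_nonneg (hw _)]
    _ ≤ ∑ i, w i * c := by gcongr with i; exacts [hw i, hf i]
    _ = c := by rw [← sum_mul, hw_sum, one_mul]

def softBellman {S A : Type*} [Fintype S] [Fintype A] (T : S → A → S → ℝ) (γ α : ℝ)
    (r : S → A → ℝ) (Q : S → A → ℝ) : S → A → ℝ :=
  fun s a => r s a + γ * ∑ s', T s a s' * softMax α (Q s')

section SoftBellman

variable {S A : Type*} [Fintype S] [Fintype A] {T : S → A → S → ℝ} {γ α : ℝ}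
  {r : S → A → ℝ}

lemma isSoftBellmanFixedPoint_iff {Q : S → A → ℝ} :
    IsSoftBellmanFixedPoint T γ α r Q ↔ Function.IsFixedPt (softBellman T γ α r) Q := by
  simp only [IsSoftBellmanFixedPoint, Function.IsFixedPt, funext_iff, softBellman, softMax,
    eq_comm]

variable [Nonempty A]

lemma lipschitzWith_softBellman (hT_nonneg : ∀ s a s', 0 ≤ T s a s')
    (hT_sum : ∀ s a, ∑ s', T s a s' = 1) (hγ0 : 0 ≤ γ) (hα : 0 < α) :
    LipschitzWith ⟨γ, hγ0⟩ (softBellman T γ α r) := by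
  refine LipschitzWith.of_dist_le_mul fun Q Q' => ?_
  refine (dist_pi_le_iff (by positivity)).2 fun s => (dist_pi_le_iff (by positivity)).2 fun a => ?_
  have hV : ∀ s', |softMax α (Q s') - softMax α (Q' s')| ≤ dist Q Q' := fun s' => by
    rw [← Real.dist_eq]
    exact ((lipschitzWith_one_softMax hα).dist_le_mul _ _).trans
      (by simpa using dist_le_pi_dist Q Q' s')
  calc dist (softBellman T γ α r Q s a) (softBellman T γ α r Q' s a)
      = |γ * ∑ s', T s a s' * (softMax α (Q s') - softMax α (Q' s'))| := by
        simp only [softBellman, Real.dist_eq, mul_sub, sum_sub_distrib, add_sub_add_left_eq_sub]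
    _ = γ * |∑ s', T s a s' * (softMax α (Q s') - softMax α (Q' s'))| := by
        rw [abs_mul, abs_of_nonneg hγ0]
    _ ≤ γ * dist Q Q' := by
        gcongr
        exact abs_sum_mul_le_of_sum_eq_one (hT_nonneg s a) (hT_sum s a) hV

lemma contractingWith_softBellman (hT_nonneg : ∀ s a s', 0 ≤ T s a s')
    (hT_sum : ∀ s a, ∑ s', T s a s' = 1) (hγ0 : 0 ≤ γ) (hγ1 : γ < 1) (hα : 0 < α) :
    ContractingWith ⟨γ, hγ0⟩ (softBellman T γ α r) :=
  ⟨by exact_mod_cast hγ1, lipschitzWith_softBellman hT_nonneg hT_sum hγ0 hα⟩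

end SoftBellman

lemma IsSoftBellmanFixedPoint.reward_eq {S A : Type*} [Fintype S] [Fintype A]
    {T : S → A → S → ℝ} {γ α : ℝ} {r Q : S → A → ℝ} (hQ : IsSoftBellmanFixedPoint T γ α r Q)
    (s : S) (a : A) :
    r s a = Q s a - γ * ∑ s', T s a s' * (α * log (∑ a', exp (Q s' a' / α))) := by
  rw [hQ s a, add_sub_cancel_right]

end

theorem soft_bellman_bijection_general {S A : Type*} [Fintype S] [Fintype A]
    [Nonempty A]
    (T : S → A → S → ℝ) (hT_nonneg : ∀ s a s', 0 ≤ T s a s')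
    (hT_sum : ∀ s a, ∑ s', T s a s' = 1)
    (γ : ℝ) (hγ0 : 0 ≤ γ) (hγ1 : γ < 1) (α : ℝ) (hα : 0 < α) :
    (∀ r : S → A → ℝ, ∃! Q : S → A → ℝ, IsSoftBellmanFixedPoint T γ α r Q) ∧
    (∀ r₁ r₂ Q, IsSoftBellmanFixedPoint T γ α r₁ Q →
      IsSoftBellmanFixedPoint T γ α r₂ Q → r₁ = r₂) ∧
    (∀ r Q, IsSoftBellmanFixedPoint T γ α r Q →
      ∀ s a, r s a = Q s a -
        γ * ∑ s', T s a s' * (α * Real.log (∑ a', Real.exp (Q s' a' / α)))) := by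
  refine ⟨fun r => ?_, fun r₁ r₂ Q h₁ h₂ => ?_, fun r Q hQ => hQ.reward_eq⟩
  · have hB := contractingWith_softBellman (r := r) hT_nonneg hT_sum hγ0 hγ1 hα
    simp only [isSoftBellmanFixedPoint_iff]
    exact ⟨_, hB.fixedPoint_isFixedPt, fun Q hQ => hB.fixedPoint_unique hQ⟩
  · funext s a
    rw [h₁.reward_eq, h₂.reward_eq]

/-- The map from rewards to optimal soft-Q functions is a bijection: the soft
Bellman equation has a unique solution for each reward `r`, distinct rewards have
distinct fixed points, and the inverse map is
`r(s,a) = Q(s,a) − γ·∑_{s'} T(s'|s,a)·V_Q(s')`. -/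
theorem soft_bellman_bijection {S A : Type*} [Fintype S] [Fintype A]
    [Nonempty S] [Nonempty A]
    (T : S → A → S → ℝ) (hT_nonneg : ∀ s a s', 0 ≤ T s a s')
    (hT_sum : ∀ s a, ∑ s', T s a s' = 1)
    (γ : ℝ) (hγ0 : 0 ≤ γ) (hγ1 : γ < 1) (α : ℝ) (hα : 0 < α) :
    (∀ r : S → A → ℝ, ∃! Q : S → A → ℝ, IsSoftBellmanFixedPoint T γ α r Q) ∧
    (∀ r₁ r₂ Q, IsSoftBellmanFixedPoint T γ α r₁ Q →
      IsSoftBellmanFixedPoint T γ α r₂ Q → r₁ = r₂) ∧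
    (∀ r Q, IsSoftBellmanFixedPoint T γ α r Q →
      ∀ s a, r s a = Q s a -
        γ * ∑ s', T s a s' * (α * Real.log (∑ a', Real.exp (Q s' a' / α)))) :=
  soft_bellman_bijection_general T hT_nonneg hT_sum γ hγ0 hγ1 α hα
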